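/- arXiv:2605.12695 — 3 statements merged into one kernel-verified Lean document; each statement's English description precedes it below -/
import Mathlib

section
/- Let c ∈ H, let n ≥ 1, and let f ∈ H. For a sequence of normal contraction operators P_j on a Hilbert space H with P_j c = c, ‖P_j^n f − c‖ → 0 as j → ∞ if and only if ‖P_j f − c‖ → 0 as j → ∞. -/
open Filter Topology ContinuousLinearMap

section Aux
variable {H : Type*} [NormedAddCommGroup H] [InnerProductSpace ℂ H] [CompleteSpace H]

lemma norm_adjoint_eq' (T : H →L[ℂ] H) (hT : T ∘L adjoint T = adjoint T ∘L T) (x : H) :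
    ‖adjoint T x‖ = ‖T x‖ := by
  have h1 : (inner ℂ (adjoint T x) (adjoint T x) : ℂ) = inner ℂ (T x) (T x) := by
    rw [adjoint_inner_left]
    have : T (adjoint T x) = adjoint T (T x) := by
      have := congrArg (fun A => A x) hT
      simpa using this
    rw [this, adjoint_inner_right]
  rw [inner_self_eq_norm_sq_to_K, inner_self_eq_norm_sq_to_K] at h1
  have h2 : ‖adjoint T x‖ ^ 2 = ‖T x‖ ^ 2 := by exact_mod_cast h1
  nlinarith [norm_nonneg (adjoint T x), norm_nonneg (T x)]

lemma key_sq' (T : H →L[ℂ] H) (hT : T ∘L adjoint T = adjoint T ∘L T) (x : H) :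
    ‖T x‖ ^ 2 ≤ ‖x‖ * ‖T (T x)‖ := by
  calc ‖T x‖ ^ 2 = ‖(inner ℂ (T x) (T x) : ℂ)‖ := by
        rw [inner_self_eq_norm_sq_to_K]; simp
    _ = ‖(inner ℂ (x : H) (adjoint T (T x)) : ℂ)‖ := by rw [adjoint_inner_right]
    _ ≤ ‖x‖ * ‖adjoint T (T x)‖ := norm_inner_le_norm _ _
    _ = ‖x‖ * ‖T (T x)‖ := by rw [norm_adjoint_eq' T hT]

lemma contr_apply (T : H →L[ℂ] H) (hc : ‖T‖ ≤ 1) (y : H) : ‖T y‖ ≤ ‖y‖ := by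
  calc ‖T y‖ ≤ ‖T‖ * ‖y‖ := T.le_opNorm y
    _ ≤ 1 * ‖y‖ := mul_le_mul_of_nonneg_right hc (norm_nonneg y)
    _ = ‖y‖ := one_mul _

lemma step_lemma (T : H →L[ℂ] H) (hc : ‖T‖ ≤ 1)
    (hT : T ∘L adjoint T = adjoint T ∘L T) (x : H) (k : ℕ) :
    ‖T x‖ * ‖(T ^ k) x‖ ≤ ‖x‖ * ‖(T ^ (k + 1)) x‖ := by
  induction k with
  | zero => simp [mul_comm]
  | succ k ih =>
    have hpow : ∀ m, (T ^ (m + 1)) x = T ((T ^ m) x) := by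
      intro m; rw [pow_succ']; simp [mul_apply]
    by_cases hb : ‖(T ^ (k + 1)) x‖ = 0
    · rw [hb, mul_zero]; positivity
    · have hb' : 0 < ‖(T ^ (k + 1)) x‖ := lt_of_le_of_ne (norm_nonneg _) (Ne.symm hb)
      have hsq : ‖(T ^ (k + 1)) x‖ ^ 2 ≤ ‖(T ^ k) x‖ * ‖(T ^ (k + 2)) x‖ := by
        have := key_sq' T hT ((T ^ k) x)
        rw [← hpow k, ← hpow (k + 1)] at this
        exact this
      nlinarith [mul_le_mul_of_nonneg_right ih (norm_nonneg ((T ^ (k + 2)) x)),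
        mul_le_mul_of_nonneg_left hsq (norm_nonneg (T x)),
        norm_nonneg x, norm_nonneg (T x), norm_nonneg ((T ^ (k + 2)) x)]

lemma pow_ineq (T : H →L[ℂ] H) (hc : ‖T‖ ≤ 1)
    (hT : T ∘L adjoint T = adjoint T ∘L T) (x : H) (m : ℕ) :
    ‖T x‖ ^ (m + 1) ≤ ‖x‖ ^ m * ‖(T ^ (m + 1)) x‖ := by
  induction m with
  | zero => simp
  | succ m ih =>
    calc ‖T x‖ ^ (m + 2) = ‖T x‖ ^ (m + 1) * ‖T x‖ := by ring
      _ ≤ (‖x‖ ^ m * ‖(T ^ (m + 1)) x‖) * ‖T x‖ :=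
          mul_le_mul_of_nonneg_right ih (norm_nonneg _)
      _ = ‖x‖ ^ m * (‖T x‖ * ‖(T ^ (m + 1)) x‖) := by ring
      _ ≤ ‖x‖ ^ m * (‖x‖ * ‖(T ^ (m + 2)) x‖) :=
          mul_le_mul_of_nonneg_left (step_lemma T hc hT x (m + 1)) (by positivity)
      _ = ‖x‖ ^ (m + 1) * ‖(T ^ (m + 2)) x‖ := by ring

end Aux

theorem stmt1 {H : Type*} [NormedAddCommGroup H] [InnerProductSpace ℂ H] [CompleteSpace H]
    (P : ℕ → H →L[ℂ] H) (hcontr : ∀ j, ‖P j‖ ≤ 1)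
    (hnormal : ∀ j, (P j) ∘L (adjoint (P j)) = (adjoint (P j)) ∘L (P j))
    (c : H) (hfix : ∀ j, P j c = c) (n : ℕ) (hn : 1 ≤ n) (f : H) :
    Tendsto (fun j => ‖((P j) ^ n) f - c‖) atTop (𝓝 0) ↔
      Tendsto (fun j => ‖(P j) f - c‖) atTop (𝓝 0) := by
  obtain ⟨m, rfl⟩ : ∃ m, n = m + 1 := ⟨n - 1, (Nat.succ_pred_eq_of_pos hn).symm⟩
  clear hn
  have hpow : ∀ j k, ((P j) ^ (k + 1)) f = (P j) (((P j) ^ k) f) := by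
    intro j k; rw [pow_succ']; simp [mul_apply]
  have hfixpow : ∀ j k, ((P j) ^ k) c = c := by
    intro j k
    induction k with
    | zero => simp
    | succ k ih => rw [pow_succ, ContinuousLinearMap.mul_apply, hfix, ih]
  have hTsub : ∀ j k, ((P j) ^ k) f - c = ((P j) ^ k) (f - c) := by
    intro j k; rw [map_sub, hfixpow]
  constructor
  · -- hard direction
    intro h
    have key : ∀ j, ‖(P j) f - c‖ ^ (m + 1) ≤ ‖f - c‖ ^ m * ‖((P j) ^ (m + 1)) f - c‖ := by
      intro j
      have := pow_ineq (P j) (hcontr j) (hnormal j) (f - c) m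
      rw [map_sub, hfix, ← hTsub] at this
      exact this
    have h1 : Tendsto (fun j => ‖(P j) f - c‖ ^ (m + 1)) atTop (𝓝 0) := by
      apply squeeze_zero (fun j => by positivity) key
      have := h.const_mul (‖f - c‖ ^ m)
      simpa using this
    have h2 : Tendsto (fun j => (‖(P j) f - c‖ ^ (m + 1) : ℝ) ^ ((m + 1 : ℝ)⁻¹)) atTop
        (𝓝 ((0 : ℝ) ^ ((m + 1 : ℝ)⁻¹))) := by
      exact (Real.continuousAt_rpow_const 0 _ (Or.inr (by positivity))).tendsto.comp h1
    have heq : ∀ j, (‖(P j) f - c‖ ^ (m + 1) : ℝ) ^ ((m + 1 : ℝ)⁻¹) = ‖(P j) f - c‖ := by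
      intro j
      rw [← Real.rpow_natCast (‖(P j) f - c‖) (m + 1), ← Real.rpow_mul (norm_nonneg _)]
      push_cast
      rw [mul_inv_cancel₀ (by positivity), Real.rpow_one]
    have hz : ((0 : ℝ) ^ ((m + 1 : ℝ)⁻¹)) = 0 := Real.zero_rpow (by positivity)
    rw [hz] at h2
    simpa [heq] using h2
  · -- easy direction
    intro h
    apply squeeze_zero (fun j => norm_nonneg _) _ h
    intro j
    calc ‖((P j) ^ (m + 1)) f - c‖ = ‖((P j) ^ m) ((P j) f - c)‖ := by
          rw [map_sub, hfixpow, pow_succ, ContinuousLinearMap.mul_apply]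
      _ ≤ ‖(P j) ^ m‖ * ‖(P j) f - c‖ := le_opNorm _ _
      _ ≤ 1 * ‖(P j) f - c‖ := by
          apply mul_le_mul_of_nonneg_right _ (norm_nonneg _)
          induction m with
          | zero => simpa [ContinuousLinearMap.one_def] using ContinuousLinearMap.norm_id_le
          | succ k ih =>
            calc ‖(P j) ^ (k + 1)‖ = ‖(P j) ^ k * P j‖ := by rw [pow_succ]
              _ ≤ ‖(P j) ^ k‖ * ‖P j‖ := norm_mul_le _ _
              _ ≤ 1 * 1 := mul_le_mul ih (hcontr j) (norm_nonneg _) zero_le_one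
              _ = 1 := one_mul 1
      _ = ‖(P j) f - c‖ := one_mul _
end

section
/- Let G be a locally compact commutative group with a measure-preserving ergodic action T on a probability space (X, μ), and let ν_j be Borel probability measures on G. If for some n ≥ 1 the convolution powers ν_j^{*n} form a universal sequence (i.e., the averages with weights ν_j^{*n} of every f ∈ L¹(μ) converge in L¹ to ∫ f dμ), then the sequence ν_j is also universal. -/
/-!
For a commutative group action the averaging operators `P_ν` are commuting contractions of
`L²(μ)`, and the adjoint of `P_ν` is `P_ν.neg`; so `P = P_ν` is normal and Cauchy–Schwarz gives
`‖P^m f‖₂² = ⟪f, P*^m P^m f⟫ ≤ ‖f‖₂ ‖P^(2m) f‖₂`. Iterating this doubling step yields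
`‖P f‖₂^(2^(k+1)) ≤ ‖f‖₂^(2^(k+1)-2) ‖P^n f‖₂²` for `n ≤ 2^k`, and for bounded `f` the right-hand
side is controlled by `‖P^n f‖₁ = ‖P_{ν^{*n}} f‖₁`. Applied to `f - ∫ f`, universality of
`ν_j^{*n}` thus gives `‖P_{ν_j} f - ∫ f‖₁ → 0` for bounded `f`; as every `P_ν` is an `L¹`
contraction and bounded functions are dense in `L¹`, this extends to all of `L¹`.
-/

open MeasureTheory Filter Topology

noncomputable def conv {G : Type} [AddCommGroup G] [MeasurableSpace G]
    (ν ν' : Measure G) : Measure G :=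
  Measure.map (fun p : G × G => p.1 + p.2) (ν.prod ν')

noncomputable def convPow {G : Type} [AddCommGroup G] [MeasurableSpace G]
    (ν : Measure G) : ℕ → Measure G
  | 0 => Measure.dirac 0
  | n + 1 => conv ν (convPow ν n)

/-- A sequence of probability measures on `G` is universal if for every ergodic
measure-preserving action of `G` on a probability space and every integrable `f`,
the weighted averages converge in `L¹` to `∫ f dμ`. -/
def IsUniversalSeq {G : Type} [AddCommGroup G] [MeasurableSpace G]
    (ν : ℕ → Measure G) : Prop :=
  ∀ (X : Type) (_ : MeasurableSpace X) (μ : Measure X), IsProbabilityMeasure μ →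
    ∀ T : G → X → X, (Measurable fun p : G × X => T p.1 p.2) →
      (∀ g, MeasurePreserving (T g) μ μ) → T 0 = id →
      (∀ g h : G, T (g + h) = T g ∘ T h) →
      (∀ φ : X → ℝ, Measurable φ →
        (∀ g, (fun x => φ (T g x)) =ᵐ[μ] φ) → ∃ c, φ =ᵐ[μ] fun _ => c) →
      ∀ f : X → ℝ, Integrable f μ →
        Tendsto (fun j => ∫ x, |(∫ g, f (T g x) ∂(ν j)) - ∫ y, f y ∂μ| ∂μ)
          atTop (𝓝 0)

open Function

section CauchySchwarz

variable {α : Type*} [MeasurableSpace α] {μ : Measure α}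

theorem sq_integral_mul_le {u w : α → ℝ} (hu : MemLp u 2 μ) (hw : MemLp w 2 μ) :
    (∫ x, u x * w x ∂μ) ^ 2 ≤ (∫ x, u x ^ 2 ∂μ) * ∫ x, w x ^ 2 ∂μ := by
  have inner_toLp : ∀ {f g : α → ℝ} (hf : MemLp f 2 μ) (hg : MemLp g 2 μ),
      inner ℝ (hf.toLp f) (hg.toLp g) = ∫ x, f x * g x ∂μ := by
    intro f g hf hg
    rw [L2.inner_def]
    refine integral_congr_ae ?_
    filter_upwards [hf.coeFn_toLp, hg.coeFn_toLp] with x hfx hgx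
    simp [hfx, hgx, mul_comm]
  simpa only [sq, inner_toLp] using real_inner_mul_inner_self_le (hu.toLp u) (hw.toLp w)

theorem sq_integral_le_integral_sq [IsProbabilityMeasure μ] {u : α → ℝ} (hu : MemLp u 2 μ) :
    (∫ x, u x ∂μ) ^ 2 ≤ ∫ x, u x ^ 2 ∂μ := by
  simpa using sq_integral_mul_le hu (memLp_const (1 : ℝ))

end CauchySchwarz

theorem MeasureTheory.MeasurePreserving.integral_comp_of_aestronglyMeasurable {α β : Type*}
    [MeasurableSpace α] [MeasurableSpace β] {μa : Measure α} {μb : Measure β} {π : α → β}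
    (hπ : MeasurePreserving π μa μb) {f : β → ℝ} (hf : AEStronglyMeasurable f μb) :
    ∫ a, f (π a) ∂μa = ∫ b, f b ∂μb := by
  rw [← integral_map hπ.measurable.aemeasurable (hπ.map_eq.symm ▸ hf), hπ.map_eq]

theorem Filter.Tendsto.of_pow_nhds_zero {ι : Type*} {l : Filter ι} {x : ι → ℝ}
    (hx : ∀ i, 0 ≤ x i) {M : ℕ} (hM : M ≠ 0) (h : Tendsto (fun i => x i ^ M) l (𝓝 0)) :
    Tendsto x l (𝓝 0) := by
  have := h.rpow_const (p := (M : ℝ)⁻¹) (Or.inr (by positivity))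
  simpa [Real.pow_rpow_inv_natCast (hx _) hM, Real.zero_rpow (by positivity : (M : ℝ)⁻¹ ≠ 0)]
    using this

theorem pow_two_pow_le_of_sq_le {a : ℕ → ℝ} {S : ℝ} (ha : ∀ k, 0 ≤ a k) (hS : 0 ≤ S)
    (h : ∀ k, a k ^ 2 ≤ S * a (k + 1)) (k : ℕ) : a 0 ^ 2 ^ k ≤ S ^ (2 ^ k - 1) * a k := by
  induction k with
  | zero => simp
  | succ k ih =>
    have hexp : 2 * (2 ^ k - 1) + 1 = 2 ^ (k + 1) - 1 := by
      have := Nat.one_le_two_pow (n := k)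
      rw [pow_succ]
      omega
    calc a 0 ^ 2 ^ (k + 1) = (a 0 ^ 2 ^ k) ^ 2 := by rw [pow_succ, pow_mul]
      _ ≤ (S ^ (2 ^ k - 1) * a k) ^ 2 := pow_le_pow_left₀ (pow_nonneg (ha 0) _) ih 2
      _ = S ^ (2 * (2 ^ k - 1)) * a k ^ 2 := by ring
      _ ≤ S ^ (2 * (2 ^ k - 1)) * (S * a (k + 1)) := by gcongr; exact h k
      _ = S ^ (2 ^ (k + 1) - 1) * a (k + 1) := by rw [← mul_assoc, ← pow_succ, hexp]

structure IsBddMeasurable {Y : Type*} [MeasurableSpace Y] (f : Y → ℝ) : Prop where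
  measurable : Measurable f
  exists_bound : ∃ C, ∀ y, |f y| ≤ C

namespace IsBddMeasurable

variable {Y Z : Type*} [MeasurableSpace Y] [MeasurableSpace Z] {f g : Y → ℝ}

theorem memLp (hf : IsBddMeasurable f) (μ : Measure Y) [IsFiniteMeasure μ] (p : ENNReal) :
    MemLp f p μ :=
  let ⟨C, hC⟩ := hf.exists_bound
  .of_bound hf.measurable.aestronglyMeasurable C (ae_of_all _ hC)

theorem integrable (hf : IsBddMeasurable f) (μ : Measure Y) [IsFiniteMeasure μ] :
    Integrable f μ :=
  memLp_one_iff_integrable.1 (hf.memLp μ 1)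

theorem comp (hf : IsBddMeasurable f) {φ : Z → Y} (hφ : Measurable φ) :
    IsBddMeasurable fun z => f (φ z) :=
  let ⟨C, hC⟩ := hf.exists_bound
  ⟨hf.measurable.comp hφ, C, fun z => hC (φ z)⟩

theorem mul (hf : IsBddMeasurable f) (hg : IsBddMeasurable g) :
    IsBddMeasurable fun y => f y * g y := by
  obtain ⟨C, hC⟩ := hf.exists_bound
  obtain ⟨D, hD⟩ := hg.exists_bound
  refine ⟨hf.measurable.mul hg.measurable, C * D, fun y => ?_⟩
  rw [abs_mul]
  exact mul_le_mul (hC y) (hD y) (abs_nonneg _) ((abs_nonneg _).trans (hC y))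

theorem pow (hf : IsBddMeasurable f) (n : ℕ) : IsBddMeasurable fun y => f y ^ n := by
  obtain ⟨C, hC⟩ := hf.exists_bound
  refine ⟨hf.measurable.pow_const n, C ^ n, fun y => ?_⟩
  rw [abs_pow]
  exact pow_le_pow_left₀ (abs_nonneg _) (hC y) n

theorem abs (hf : IsBddMeasurable f) : IsBddMeasurable fun y => |f y| :=
  let ⟨C, hC⟩ := hf.exists_bound
  ⟨hf.measurable.abs, C, fun y => (abs_abs (f y)).trans_le (hC y)⟩

theorem sub_const (hf : IsBddMeasurable f) (c : ℝ) : IsBddMeasurable fun y => f y - c := by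
  obtain ⟨C, hC⟩ := hf.exists_bound
  exact ⟨hf.measurable.sub_const c, C + |c|, fun y => (abs_sub _ _).trans (by linarith [hC y])⟩

theorem integral_sq_le_mul_integral_abs (hf : IsBddMeasurable f) (μ : Measure Y)
    [IsFiniteMeasure μ] {C : ℝ} (hC : ∀ y, |f y| ≤ C) :
    ∫ y, f y ^ 2 ∂μ ≤ C * ∫ y, |f y| ∂μ := by
  rw [← integral_const_mul]
  refine integral_mono ((hf.pow 2).integrable μ) ((hf.abs.integrable μ).const_mul C) fun y => ?_
  rw [← sq_abs, sq]
  exact mul_le_mul_of_nonneg_right (hC y) (abs_nonneg _)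

end IsBddMeasurable

theorem MeasureTheory.Integrable.exists_isBddMeasurable_integral_abs_sub_lt {Y : Type*}
    [MeasurableSpace Y] {μ : Measure Y} {f : Y → ℝ} (hf : Integrable f μ) {ε : ℝ} (hε : 0 < ε) :
    ∃ g, IsBddMeasurable g ∧ ∫ y, |f y - g y| ∂μ < ε := by
  obtain ⟨g, hfg, hg⟩ := (memLp_one_iff_integrable.2 hf).exists_simpleFunc_eLpNorm_sub_lt
    ENNReal.one_ne_top (ENNReal.ofReal_pos.2 hε).ne'
  refine ⟨g, ⟨g.measurable, g.exists_forall_norm_le⟩, ?_⟩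
  rw [← ENNReal.ofReal_lt_ofReal_iff hε]
  convert hfg using 1
  rw [eLpNorm_one_eq_lintegral_enorm,
    ← ofReal_integral_norm_eq_lintegral_enorm (hf.sub (memLp_one_iff_integrable.1 hg))]
  rfl

structure IsMeasurableAction {G X : Type*} [AddCommGroup G] [MeasurableSpace G]
    [MeasurableSpace X] (T : G → X → X) : Prop where
  measurable_uncurry : Measurable fun p : G × X => T p.1 p.2
  map_zero : T 0 = id
  map_add : ∀ g h, T (g + h) = T g ∘ T h

noncomputable def avgOp {G X : Type*} [MeasurableSpace G] (T : G → X → X) (ν : Measure G)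
    (f : X → ℝ) (x : X) : ℝ :=
  ∫ g, f (T g x) ∂ν

noncomputable def avgDeviation {G X : Type*} [MeasurableSpace G] [MeasurableSpace X]
    (T : G → X → X) (μ : Measure X) (ν : Measure G) (f : X → ℝ) : ℝ :=
  ∫ x, |avgOp T ν f x - ∫ y, f y ∂μ| ∂μ

section Bound

variable {G X : Type*} [MeasurableSpace G] {T : G → X → X} {ν : Measure G} {f : X → ℝ}

theorem abs_avgOp_le [IsProbabilityMeasure ν] {C : ℝ} (hC : ∀ x, |f x| ≤ C) (x : X) :
    |avgOp T ν f x| ≤ C := by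
  simpa [avgOp] using norm_integral_le_of_norm_le_const (μ := ν) (f := fun g => f (T g x))
    (ae_of_all _ fun g => hC _)

theorem abs_iterate_avgOp_le [IsProbabilityMeasure ν] {C : ℝ} (hC : ∀ x, |f x| ≤ C) (m : ℕ)
    (x : X) : |(avgOp T ν)^[m] f x| ≤ C := by
  induction m generalizing x with
  | zero => exact hC x
  | succ m ih => rw [iterate_succ_apply']; exact abs_avgOp_le ih x

theorem IsBddMeasurable.avgOp [MeasurableSpace X] (hf : IsBddMeasurable f)
    (hT : Measurable fun p : G × X => T p.1 p.2) (ν : Measure G) [IsProbabilityMeasure ν] :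
    IsBddMeasurable (_root_.avgOp T ν f) := by
  obtain ⟨C, hC⟩ := hf.exists_bound
  refine ⟨?_, C, abs_avgOp_le hC⟩
  exact (StronglyMeasurable.integral_prod_right' (f := fun p : X × G => f (T p.2 p.1))
    (hf.measurable.comp (hT.comp measurable_swap)).stronglyMeasurable).measurable

theorem avgOp_sub_const [MeasurableSpace X] (hT : Measurable fun p : G × X => T p.1 p.2)
    [IsProbabilityMeasure ν] (hf : IsBddMeasurable f) (c : ℝ) (x : X) :
    avgOp T ν (fun y => f y - c) x = avgOp T ν f x - c := by
  rw [avgOp, avgOp, integral_sub ((hf.comp hT.of_uncurry_right).integrable ν) (integrable_const c),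
    integral_const, probReal_univ, one_smul]

theorem IsBddMeasurable.iterate_avgOp [MeasurableSpace X] (hf : IsBddMeasurable f)
    (hT : Measurable fun p : G × X => T p.1 p.2) (ν : Measure G) [IsProbabilityMeasure ν]
    (m : ℕ) : IsBddMeasurable ((_root_.avgOp T ν)^[m] f) :=
  (show Set.MapsTo (_root_.avgOp T ν) {f | IsBddMeasurable f} {f | IsBddMeasurable f} from
    fun _ h => h.avgOp hT ν).iterate m hf

end Bound

section Action

variable {G X : Type*} [AddCommGroup G] [MeasurableSpace G] [MeasurableSpace X]
  {T : G → X → X} {ν κ : Measure G} {f : X → ℝ}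

namespace IsMeasurableAction

theorem measurable_orbit (hT : IsMeasurableAction T) (x : X) : Measurable fun g => T g x :=
  hT.measurable_uncurry.of_uncurry_right

theorem measurable_apply_apply (hT : IsMeasurableAction T) (x : X) :
    Measurable fun p : G × G => T p.2 (T p.1 x) :=
  hT.measurable_uncurry.comp
    (measurable_snd.prodMk ((hT.measurable_orbit x).comp measurable_fst))

theorem apply_add (hT : IsMeasurableAction T) (g h : G) (x : X) :
    T (g + h) x = T g (T h x) := by
  rw [hT.map_add, comp_apply]

theorem apply_comm (hT : IsMeasurableAction T) (g h : G) (x : X) :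
    T g (T h x) = T h (T g x) := by
  rw [← hT.apply_add, add_comm, hT.apply_add]

theorem apply_apply_neg (hT : IsMeasurableAction T) (g : G) (x : X) : T g (T (-g) x) = x := by
  rw [← hT.apply_add, add_neg_cancel, hT.map_zero, id]

end IsMeasurableAction


theorem avgOp_comm (hT : IsMeasurableAction T) [IsProbabilityMeasure ν] [IsProbabilityMeasure κ]
    (hf : IsBddMeasurable f) : avgOp T ν (avgOp T κ f) = avgOp T κ (avgOp T ν f) := by
  funext x
  calc avgOp T ν (avgOp T κ f) x = ∫ a, ∫ b, f (T b (T a x)) ∂κ ∂ν := rfl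
    _ = ∫ b, ∫ a, f (T b (T a x)) ∂ν ∂κ :=
      integral_integral_swap ((hf.comp (hT.measurable_apply_apply x)).integrable _)
    _ = avgOp T κ (avgOp T ν f) x := by simp only [avgOp, hT.apply_comm _ (_ : G) x]

theorem avgOp_conv (hT : IsMeasurableAction T) [IsProbabilityMeasure ν] [IsProbabilityMeasure κ]
    (hadd : AEMeasurable (fun p : G × G => p.1 + p.2) (ν.prod κ)) (hf : IsBddMeasurable f) :
    avgOp T (Measure.map (fun p : G × G => p.1 + p.2) (ν.prod κ)) f
      = avgOp T ν (avgOp T κ f) := by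
  funext x
  calc _ = ∫ p : G × G, f (T (p.1 + p.2) x) ∂ν.prod κ :=
        integral_map hadd (hf.comp (hT.measurable_orbit x)).measurable.aestronglyMeasurable
    _ = ∫ p : G × G, f (T p.2 (T p.1 x)) ∂ν.prod κ :=
        integral_congr_ae (ae_of_all _ fun p => by dsimp only; rw [add_comm, hT.apply_add])
    _ = avgOp T ν (avgOp T κ f) x :=
        integral_prod _ ((hf.comp (hT.measurable_apply_apply x)).integrable _)

theorem iterate_avgOp_comm (hT : IsMeasurableAction T) [IsProbabilityMeasure ν]
    (κ : Measure G) [IsProbabilityMeasure κ] (m k : ℕ) {u : X → ℝ} (hu : IsBddMeasurable u) :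
    (avgOp T ν)^[m] ((avgOp T κ)^[k] u) = (avgOp T κ)^[k] ((avgOp T ν)^[m] u) := by
  have hT' := hT.measurable_uncurry
  have hcomm : ∀ k {u : X → ℝ}, IsBddMeasurable u →
      avgOp T ν ((avgOp T κ)^[k] u) = (avgOp T κ)^[k] (avgOp T ν u) := by
    intro k
    induction k with
    | zero => intro u _; rfl
    | succ k ih =>
      intro u hu
      rw [iterate_succ_apply', iterate_succ_apply',
        avgOp_comm hT (hu.iterate_avgOp hT' κ k), ih hu]
  induction m generalizing u with
  | zero => rfl
  | succ m ih =>
    rw [iterate_succ_apply, iterate_succ_apply, hcomm k hu, ih (hu.avgOp hT' ν)]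

end Action

section MeasurePreserving

variable {G X : Type*} [MeasurableSpace G] [MeasurableSpace X]
  {T : G → X → X} {μ : Measure X} [IsProbabilityMeasure μ] {f g : X → ℝ}

theorem measurePreserving_uncurry (hT : Measurable fun p : G × X => T p.1 p.2)
    (hmp : ∀ g, MeasurePreserving (T g) μ μ) (ν : Measure G) [IsProbabilityMeasure ν] :
    MeasurePreserving (fun p : G × X => T p.1 p.2) (ν.prod μ) μ := by
  refine ⟨hT, Measure.ext fun s hs => ?_⟩
  rw [Measure.map_apply hT hs, Measure.prod_apply (hT hs)]
  have hfiber : ∀ g, μ (Prod.mk g ⁻¹' ((fun p : G × X => T p.1 p.2) ⁻¹' s)) = μ s :=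
    fun g => (hmp g).measure_preimage hs.nullMeasurableSet
  simp [hfiber]

variable (ν : Measure G) [IsProbabilityMeasure ν]

theorem integrable_comp_swap_uncurry (hT : Measurable fun p : G × X => T p.1 p.2)
    (hmp : ∀ g, MeasurePreserving (T g) μ μ) (hf : Integrable f μ) :
    Integrable (fun p : X × G => f (T p.2 p.1)) (μ.prod ν) :=
  (((measurePreserving_uncurry hT hmp ν).integrable_comp hf.aestronglyMeasurable).2 hf).swap

theorem integrable_avgOp (hT : Measurable fun p : G × X => T p.1 p.2)
    (hmp : ∀ g, MeasurePreserving (T g) μ μ) (hf : Integrable f μ) :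
    Integrable (avgOp T ν f) μ :=
  (integrable_comp_swap_uncurry ν hT hmp hf).integral_prod_left

theorem integral_avgOp (hT : Measurable fun p : G × X => T p.1 p.2)
    (hmp : ∀ g, MeasurePreserving (T g) μ μ) (hf : Integrable f μ) :
    ∫ x, avgOp T ν f x ∂μ = ∫ x, f x ∂μ := by
  have hmp' := measurePreserving_uncurry hT hmp ν
  calc ∫ x, avgOp T ν f x ∂μ = ∫ p : X × G, f (T p.2 p.1) ∂μ.prod ν :=
        (integral_prod _ (integrable_comp_swap_uncurry ν hT hmp hf)).symm
    _ = ∫ p : G × X, f (T p.1 p.2) ∂ν.prod μ :=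
        integral_prod_swap fun p : G × X => f (T p.1 p.2)
    _ = ∫ x, f x ∂μ := hmp'.integral_comp_of_aestronglyMeasurable hf.aestronglyMeasurable

theorem integral_abs_avgOp_sub_le (hT : Measurable fun p : G × X => T p.1 p.2)
    (hmp : ∀ g, MeasurePreserving (T g) μ μ) (hf : Integrable f μ) (hg : Integrable g μ) :
    ∫ x, |avgOp T ν f x - avgOp T ν g x| ∂μ ≤ ∫ x, |f x - g x| ∂μ := by
  have hfg : Integrable (fun x => |f x - g x|) μ := (hf.sub hg).abs
  calc ∫ x, |avgOp T ν f x - avgOp T ν g x| ∂μ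
      ≤ ∫ x, avgOp T ν (fun y => |f y - g y|) x ∂μ := by
        refine integral_mono_ae ((integrable_avgOp ν hT hmp hf).sub
          (integrable_avgOp ν hT hmp hg)).abs (integrable_avgOp ν hT hmp hfg) ?_
        filter_upwards [(integrable_comp_swap_uncurry ν hT hmp hf).prod_right_ae,
          (integrable_comp_swap_uncurry ν hT hmp hg).prod_right_ae] with x hfx hgx
        rw [avgOp, avgOp, ← integral_sub hfx hgx]
        exact abs_integral_le_integral_abs
    _ = ∫ x, |f x - g x| ∂μ := integral_avgOp ν hT hmp hfg

theorem avgDeviation_le (hT : Measurable fun p : G × X => T p.1 p.2)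
    (hmp : ∀ g, MeasurePreserving (T g) μ μ) (hf : Integrable f μ) (hg : Integrable g μ) :
    avgDeviation T μ ν f ≤ avgDeviation T μ ν g + 2 * ∫ x, |f x - g x| ∂μ := by
  set cf := ∫ y, f y ∂μ
  set cg := ∫ y, g y ∂μ
  have hQf := integrable_avgOp ν hT hmp hf
  have hQg := integrable_avgOp ν hT hmp hg
  have hmean : |cf - cg| ≤ ∫ x, |f x - g x| ∂μ := by
    rw [← integral_sub hf hg]
    exact abs_integral_le_integral_abs
  calc avgDeviation T μ ν f
      ≤ ∫ x, (|avgOp T ν g x - cg| + |avgOp T ν f x - avgOp T ν g x| + |cf - cg|) ∂μ := by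
        refine integral_mono (hQf.sub (integrable_const _)).abs
          ((((hQg.sub (integrable_const _)).abs).add (hQf.sub hQg).abs).add
            (integrable_const _)) fun x => ?_
        linarith [abs_sub_le (avgOp T ν f x) (avgOp T ν g x) cf,
          abs_sub_le (avgOp T ν g x) cg cf, abs_sub_comm cg cf]
    _ = avgDeviation T μ ν g + ∫ x, |avgOp T ν f x - avgOp T ν g x| ∂μ + |cf - cg| := by
        rw [integral_add _ (integrable_const _), integral_add, integral_const, probReal_univ,
          one_smul]
        · rfl
        · exact (hQg.sub (integrable_const _)).abs
        · exact (hQf.sub hQg).abs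
        · exact ((hQg.sub (integrable_const _)).abs).add (hQf.sub hQg).abs
    _ ≤ avgDeviation T μ ν g + 2 * ∫ x, |f x - g x| ∂μ := by
        linarith [integral_abs_avgOp_sub_le ν hT hmp hf hg]

theorem integral_sq_avgOp_le (hT : Measurable fun p : G × X => T p.1 p.2)
    (hmp : ∀ g, MeasurePreserving (T g) μ μ) (hf : IsBddMeasurable f) :
    ∫ x, avgOp T ν f x ^ 2 ∂μ ≤ ∫ x, f x ^ 2 ∂μ := by
  have hf2 := hf.pow 2
  calc ∫ x, avgOp T ν f x ^ 2 ∂μ ≤ ∫ x, avgOp T ν (fun y => f y ^ 2) x ∂μ :=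
        integral_mono (((hf.avgOp hT ν).pow 2).integrable μ) ((hf2.avgOp hT ν).integrable μ)
          fun x => sq_integral_le_integral_sq ((hf.comp hT.of_uncurry_right).memLp ν 2)
    _ = ∫ x, f x ^ 2 ∂μ := integral_avgOp ν hT hmp (hf2.integrable μ)

theorem integral_sq_iterate_avgOp_le_of_le (hT : Measurable fun p : G × X => T p.1 p.2)
    (hmp : ∀ g, MeasurePreserving (T g) μ μ) (hf : IsBddMeasurable f) {m k : ℕ}
    (hmk : m ≤ k) :
    ∫ x, ((avgOp T ν)^[k] f x) ^ 2 ∂μ ≤ ∫ x, ((avgOp T ν)^[m] f x) ^ 2 ∂μ := by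
  refine antitone_nat_of_succ_le (f := fun i => ∫ x, ((avgOp T ν)^[i] f x) ^ 2 ∂μ)
    (fun i => ?_) hmk
  rw [iterate_succ_apply']
  exact integral_sq_avgOp_le ν hT hmp (hf.iterate_avgOp hT ν i)

end MeasurePreserving

section Convolution

variable {G : Type} [AddCommGroup G] [MeasurableSpace G] {ν κ : Measure G}

theorem aemeasurable_add_of_conv_ne_zero (h : conv ν κ ≠ 0) :
    AEMeasurable (fun p : G × G => p.1 + p.2) (ν.prod κ) :=
  by_contra fun hadd => h (Measure.map_of_not_aemeasurable hadd)

theorem ne_zero_of_conv_ne_zero (h : conv ν κ ≠ 0) : κ ≠ 0 := by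
  rintro rfl
  simp [conv] at h

theorem isProbabilityMeasure_convPow [IsProbabilityMeasure ν] :
    ∀ {m : ℕ}, convPow ν m ≠ 0 → IsProbabilityMeasure (convPow ν m)
  | 0, _ => by rw [convPow]; infer_instance
  | _ + 1, h =>
    have := isProbabilityMeasure_convPow (ne_zero_of_conv_ne_zero h)
    Measure.isProbabilityMeasure_map (aemeasurable_add_of_conv_ne_zero h)

theorem avgOp_convPow {X : Type*} [MeasurableSpace X] {T : G → X → X}
    (hT : IsMeasurableAction T) [IsProbabilityMeasure ν] {f : X → ℝ} (hf : IsBddMeasurable f) :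
    ∀ {m : ℕ}, convPow ν m ≠ 0 → avgOp T (convPow ν m) f = (avgOp T ν)^[m] f
  | 0, _ => funext fun x => by
    rw [convPow, avgOp, integral_dirac' (fun g => f (T g x)) _
      (hf.comp (hT.measurable_orbit x)).measurable.stronglyMeasurable, hT.map_zero, iterate_zero,
      id, id]
  | m + 1, h => by
    have hm := ne_zero_of_conv_ne_zero h
    have := isProbabilityMeasure_convPow hm
    rw [convPow, conv, avgOp_conv hT (aemeasurable_add_of_conv_ne_zero h) hf,
      avgOp_convPow hT hf hm, iterate_succ_apply']

/-- `conv` takes the junk value `0` when addition is not a.e.-measurable for the product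
σ-algebra; testing universality on a one-point space with `f = 1` shows that this happens only
finitely often. -/
theorem IsUniversalSeq.eventually_ne_zero {κ : ℕ → Measure G} (h : IsUniversalSeq κ) :
    ∀ᶠ j in atTop, κ j ≠ 0 := by
  have hone := h Unit inferInstance (Measure.dirac ()) inferInstance (fun _ => id) measurable_snd
    (fun _ => MeasurePreserving.id _) rfl (fun _ _ => rfl)
    (fun φ _ _ => ⟨φ (), ae_of_all _ fun _ => rfl⟩) (fun _ => (1 : ℝ)) (integrable_const 1)
  filter_upwards [hone.eventually (gt_mem_nhds one_pos)] with j hj hzero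
  simp [hzero] at hj

end Convolution

instance MeasureTheory.Measure.neg.instIsProbabilityMeasure {G : Type*} [MeasurableSpace G]
    [Neg G] [MeasurableNeg G] (ν : Measure G) [IsProbabilityMeasure ν] :
    IsProbabilityMeasure ν.neg :=
  Measure.isProbabilityMeasure_map measurable_neg.aemeasurable

section Normal

variable {G X : Type*} [AddCommGroup G] [MeasurableSpace G] [MeasurableNeg G]
  [MeasurableSpace X] {T : G → X → X} {μ : Measure X} [IsProbabilityMeasure μ]
  {ν : Measure G} [IsProbabilityMeasure ν]

theorem integral_avgOp_mul (hT : IsMeasurableAction T) (hmp : ∀ g, MeasurePreserving (T g) μ μ)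
    {u w : X → ℝ} (hu : IsBddMeasurable u) (hw : IsBddMeasurable w) :
    ∫ x, avgOp T ν u x * w x ∂μ = ∫ x, u x * avgOp T ν.neg w x ∂μ := by
  have hT' := hT.measurable_uncurry
  have h₁ : IsBddMeasurable fun p : X × G => u (T p.2 p.1) * w p.1 :=
    (hu.comp (hT'.comp measurable_swap)).mul (hw.comp measurable_fst)
  have h₂ : IsBddMeasurable fun p : G × X => u p.2 * w (T (-p.1) p.2) :=
    (hu.comp measurable_snd).mul
      (hw.comp (hT'.comp ((measurable_neg.comp measurable_fst).prodMk measurable_snd)))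
  calc ∫ x, avgOp T ν u x * w x ∂μ = ∫ x, ∫ g, u (T g x) * w x ∂ν ∂μ := by
        simp only [avgOp, integral_mul_const]
    _ = ∫ g, ∫ x, u (T g x) * w x ∂μ ∂ν := integral_integral_swap (h₁.integrable _)
    _ = ∫ g, ∫ x, u x * w (T (-g) x) ∂μ ∂ν := by
        refine integral_congr_ae (ae_of_all _ fun g => ?_)
        dsimp only
        rw [← (hmp (-g)).integral_comp_of_aestronglyMeasurable (f := fun y => u (T g y) * w y)
          ((hu.comp (hmp g).measurable).mul hw).measurable.aestronglyMeasurable]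
        simp only [hT.apply_apply_neg]
    _ = ∫ x, ∫ g, u x * w (T (-g) x) ∂ν ∂μ := integral_integral_swap (h₂.integrable _)
    _ = ∫ x, u x * avgOp T ν.neg w x ∂μ := by
        refine integral_congr_ae (ae_of_all _ fun x => ?_)
        dsimp only
        rw [integral_const_mul, avgOp, Measure.neg, integral_map (f := fun g => w (T g x))
          measurable_neg.aemeasurable
          (hw.comp (hT.measurable_orbit x)).measurable.aestronglyMeasurable]

theorem integral_iterate_avgOp_mul (hT : IsMeasurableAction T)
    (hmp : ∀ g, MeasurePreserving (T g) μ μ) (m : ℕ) {u w : X → ℝ} (hu : IsBddMeasurable u)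
    (hw : IsBddMeasurable w) :
    ∫ x, (avgOp T ν)^[m] u x * w x ∂μ = ∫ x, u x * (avgOp T ν.neg)^[m] w x ∂μ := by
  induction m generalizing u with
  | zero => rfl
  | succ m ih =>
    rw [iterate_succ_apply, ih (hu.avgOp hT.measurable_uncurry ν),
      integral_avgOp_mul hT hmp hu (hw.iterate_avgOp hT.measurable_uncurry _ m),
      iterate_succ_apply']

theorem integral_sq_iterate_avgOp_neg (hT : IsMeasurableAction T)
    (hmp : ∀ g, MeasurePreserving (T g) μ μ) (m : ℕ) {h : X → ℝ} (hh : IsBddMeasurable h) :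
    ∫ x, ((avgOp T ν.neg)^[m] h x) ^ 2 ∂μ = ∫ x, ((avgOp T ν)^[m] h x) ^ 2 ∂μ := by
  have hT' := hT.measurable_uncurry
  simp only [sq]
  rw [integral_iterate_avgOp_mul (ν := ν.neg) hT hmp m hh (hh.iterate_avgOp hT' _ m),
    Measure.neg_neg, integral_iterate_avgOp_mul hT hmp m hh (hh.iterate_avgOp hT' _ m),
    iterate_avgOp_comm hT _ m m hh]

theorem sq_integral_sq_iterate_avgOp_le (hT : IsMeasurableAction T)
    (hmp : ∀ g, MeasurePreserving (T g) μ μ) (m : ℕ) {f : X → ℝ} (hf : IsBddMeasurable f) :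
    (∫ x, ((avgOp T ν)^[m] f x) ^ 2 ∂μ) ^ 2
      ≤ (∫ x, f x ^ 2 ∂μ) * ∫ x, ((avgOp T ν)^[2 * m] f x) ^ 2 ∂μ := by
  have hT' := hT.measurable_uncurry
  have hQf := hf.iterate_avgOp hT' ν m
  calc (∫ x, ((avgOp T ν)^[m] f x) ^ 2 ∂μ) ^ 2
      = (∫ x, f x * (avgOp T ν.neg)^[m] ((avgOp T ν)^[m] f) x ∂μ) ^ 2 := by
        simp only [sq, integral_iterate_avgOp_mul hT hmp m hf hQf]
    _ ≤ (∫ x, f x ^ 2 ∂μ) * ∫ x, ((avgOp T ν.neg)^[m] ((avgOp T ν)^[m] f) x) ^ 2 ∂μ :=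
        sq_integral_mul_le (hf.memLp μ 2) ((hQf.iterate_avgOp hT' _ m).memLp μ 2)
    _ = (∫ x, f x ^ 2 ∂μ) * ∫ x, ((avgOp T ν)^[2 * m] f x) ^ 2 ∂μ := by
        rw [integral_sq_iterate_avgOp_neg hT hmp m hQf, two_mul, iterate_add_apply]

theorem integral_abs_avgOp_pow_le (hT : IsMeasurableAction T)
    (hmp : ∀ g, MeasurePreserving (T g) μ μ) {n k : ℕ} (hnk : n ≤ 2 ^ k) {f : X → ℝ}
    (hf : IsBddMeasurable f) {C : ℝ} (hC : ∀ x, |f x| ≤ C) :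
    (∫ x, |avgOp T ν f x| ∂μ) ^ 2 ^ (k + 1)
      ≤ (∫ x, f x ^ 2 ∂μ) ^ (2 ^ k - 1) * (C * ∫ x, |(avgOp T ν)^[n] f x| ∂μ) := by
  have hT' := hT.measurable_uncurry
  set S := ∫ x, f x ^ 2 ∂μ
  set a : ℕ → ℝ := fun i => ∫ x, ((avgOp T ν)^[2 ^ i] f x) ^ 2 ∂μ
  have hdouble : ∀ i, a i ^ 2 ≤ S * a (i + 1) := fun i => by
    have h := sq_integral_sq_iterate_avgOp_le (ν := ν) hT hmp (2 ^ i) hf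
    rwa [← pow_succ'] at h
  calc (∫ x, |avgOp T ν f x| ∂μ) ^ 2 ^ (k + 1)
        = ((∫ x, |avgOp T ν f x| ∂μ) ^ 2) ^ 2 ^ k := by rw [pow_succ', pow_mul]
    _ ≤ a 0 ^ 2 ^ k := by
        refine pow_le_pow_left₀ (sq_nonneg _) ?_ _
        simpa [a] using sq_integral_le_integral_sq ((hf.avgOp hT' ν).abs.memLp μ 2)
    _ ≤ S ^ (2 ^ k - 1) * a k :=
        pow_two_pow_le_of_sq_le (fun i => integral_nonneg fun x => sq_nonneg _)
          (integral_nonneg fun x => sq_nonneg _) hdouble k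
    _ ≤ S ^ (2 ^ k - 1) * ∫ x, ((avgOp T ν)^[n] f x) ^ 2 ∂μ := by
        gcongr
        exact integral_sq_iterate_avgOp_le_of_le ν hT' hmp hf hnk
    _ ≤ S ^ (2 ^ k - 1) * (C * ∫ x, |(avgOp T ν)^[n] f x| ∂μ) := by
        gcongr
        exact (hf.iterate_avgOp hT' ν n).integral_sq_le_mul_integral_abs μ
          (abs_iterate_avgOp_le hC n)

end Normal

section Convergence

variable {X : Type*} [MeasurableSpace X] {μ : Measure X} [IsProbabilityMeasure μ]

theorem tendsto_avgDeviation_of_isBddMeasurable {G : Type*} [MeasurableSpace G]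
    {T : G → X → X} (hT : Measurable fun p : G × X => T p.1 p.2)
    (hmp : ∀ g, MeasurePreserving (T g) μ μ) {ν : ℕ → Measure G}
    (hν : ∀ j, IsProbabilityMeasure (ν j))
    (hbdd : ∀ g, IsBddMeasurable g → Tendsto (fun j => avgDeviation T μ (ν j) g) atTop (𝓝 0))
    {f : X → ℝ} (hf : Integrable f μ) :
    Tendsto (fun j => avgDeviation T μ (ν j) f) atTop (𝓝 0) := by
  refine Metric.tendsto_atTop.2 fun ε hε => ?_
  obtain ⟨g, hg, hfg⟩ :=
    hf.exists_isBddMeasurable_integral_abs_sub_lt (by positivity : 0 < ε / 3)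
  obtain ⟨N, hN⟩ := Metric.tendsto_atTop.1 (hbdd g hg) (ε / 3) (by positivity)
  refine ⟨N, fun j hj => ?_⟩
  have := hν j
  have hdev := avgDeviation_le (ν j) hT hmp hf (hg.integrable μ)
  have hgj := hN j hj
  have hf₀ : 0 ≤ avgDeviation T μ (ν j) f := integral_nonneg fun _ => abs_nonneg _
  have hg₀ : 0 ≤ avgDeviation T μ (ν j) g := integral_nonneg fun _ => abs_nonneg _
  rw [Real.dist_eq, sub_zero, abs_of_nonneg hg₀] at hgj
  rw [Real.dist_eq, sub_zero, abs_of_nonneg hf₀]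
  linarith

theorem tendsto_integral_abs_avgOp_of_tendsto_convPow {G : Type} [AddCommGroup G]
    [MeasurableSpace G] [MeasurableNeg G] {T : G → X → X} (hT : IsMeasurableAction T)
    (hmp : ∀ g, MeasurePreserving (T g) μ μ) {ν : ℕ → Measure G}
    (hν : ∀ j, IsProbabilityMeasure (ν j)) {n : ℕ} (hne : ∀ᶠ j in atTop, convPow (ν j) n ≠ 0)
    {f : X → ℝ} (hf : IsBddMeasurable f)
    (hconv : Tendsto (fun j => ∫ x, |avgOp T (convPow (ν j) n) f x| ∂μ) atTop (𝓝 0)) :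
    Tendsto (fun j => ∫ x, |avgOp T (ν j) f x| ∂μ) atTop (𝓝 0) := by
  obtain ⟨C, hC⟩ := hf.exists_bound
  have hK := (hconv.const_mul C).const_mul ((∫ x, f x ^ 2 ∂μ) ^ (2 ^ n - 1))
  rw [mul_zero, mul_zero] at hK
  have hpow : Tendsto (fun j => (∫ x, |avgOp T (ν j) f x| ∂μ) ^ 2 ^ (n + 1)) atTop (𝓝 0) := by
    refine squeeze_zero' (.of_forall fun j => by positivity) ?_ hK
    filter_upwards [hne] with j hj
    have := hν j
    rw [avgOp_convPow hT hf hj]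
    exact integral_abs_avgOp_pow_le hT hmp Nat.lt_two_pow_self.le hf hC
  exact hpow.of_pow_nhds_zero (fun j => integral_nonneg fun _ => abs_nonneg _) (by positivity)

theorem tendsto_avgDeviation_of_tendsto_convPow {G : Type} [AddCommGroup G] [MeasurableSpace G]
    [MeasurableNeg G] {T : G → X → X} (hT : IsMeasurableAction T)
    (hmp : ∀ g, MeasurePreserving (T g) μ μ) {ν : ℕ → Measure G}
    (hν : ∀ j, IsProbabilityMeasure (ν j)) {n : ℕ} (hne : ∀ᶠ j in atTop, convPow (ν j) n ≠ 0)
    {f : X → ℝ} (hf : IsBddMeasurable f)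
    (hconv : Tendsto (fun j => avgDeviation T μ (convPow (ν j) n) (fun y => f y - ∫ y, f y ∂μ))
      atTop (𝓝 0)) :
    Tendsto (fun j => avgDeviation T μ (ν j) f) atTop (𝓝 0) := by
  have hmean : ∫ y, (f y - ∫ y, f y ∂μ) ∂μ = 0 := by
    simp [integral_sub (hf.integrable μ) (integrable_const _)]
  have hdev : ∀ j, avgDeviation T μ (ν j) f
      = ∫ x, |avgOp T (ν j) (fun y => f y - ∫ y, f y ∂μ) x| ∂μ := fun j => by
    have := hν j
    simp only [avgDeviation, avgOp_sub_const hT.measurable_uncurry hf]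
  simp only [avgDeviation, hmean, sub_zero] at hconv
  simpa only [hdev] using
    tendsto_integral_abs_avgOp_of_tendsto_convPow hT hmp hν hne (hf.sub_const _) hconv

end Convergence

theorem stmt4_general {G : Type} [AddCommGroup G] [TopologicalSpace G] [IsTopologicalAddGroup G]
    [MeasurableSpace G] [BorelSpace G]
    (ν : ℕ → Measure G) (hprob : ∀ j, IsProbabilityMeasure (ν j))
    (n : ℕ)
    (h : IsUniversalSeq (fun j => convPow (ν j) n)) :
    IsUniversalSeq ν := by
  intro X _ μ hμ T hTm hmp hT0 hTadd herg f hf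
  have hT : IsMeasurableAction T := ⟨hTm, hT0, hTadd⟩
  refine tendsto_avgDeviation_of_isBddMeasurable hTm hmp hprob (fun g hg => ?_) hf
  exact tendsto_avgDeviation_of_tendsto_convPow hT hmp hprob h.eventually_ne_zero hg
    (h X _ μ hμ T hTm hmp hT0 hTadd herg _ ((hg.sub_const _).integrable μ))

theorem stmt4 {G : Type} [AddCommGroup G] [TopologicalSpace G] [IsTopologicalAddGroup G]
    [LocallyCompactSpace G] [MeasurableSpace G] [BorelSpace G]
    (ν : ℕ → Measure G) (hprob : ∀ j, IsProbabilityMeasure (ν j))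
    (n : ℕ) (hn : 1 ≤ n)
    (h : IsUniversalSeq (fun j => convPow (ν j) n)) :
    IsUniversalSeq ν :=
  stmt4_general ν hprob n h
end

section
/- Let Γ ⊂ ℝ^d be a smooth curve in general position, meaning for almost all d-tuples of points t₁, …, t_d ∈ Γ the tangent vectors at these points are linearly independent. Let ν be a probability measure absolutely continuous with respect to arclength measure on Γ. Then the d-fold convolution power ν^{*d} is absolutely continuous with respect to Lebesgue measure on ℝ^d. -/
open MeasureTheory
-- pi absolute continuity
lemma pi_ac : ∀ (d : ℕ) (μ ν : Measure ℝ), SigmaFinite μ → SigmaFinite ν → μ ≪ ν →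
    Measure.pi (fun _ : Fin d => μ) ≪ Measure.pi (fun _ : Fin d => ν) := by
  intro d
  induction d with
  | zero =>
    intro μ ν _ _ _
    rw [Measure.pi_of_empty (fun _ : Fin 0 => μ), Measure.pi_of_empty (fun _ : Fin 0 => ν)]
  | succ n ih =>
    intro μ ν hμ hν h
    haveI := hμ; haveI := hν
    have e := MeasurableEquiv.piFinSuccAbove (fun _ : Fin (n + 1) => ℝ) 0
    have h1 := (measurePreserving_piFinSuccAbove (fun _ : Fin (n + 1) => μ) 0).symm
    have h2 := (measurePreserving_piFinSuccAbove (fun _ : Fin (n + 1) => ν) 0).symm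
    rw [← h1.map_eq, ← h2.map_eq]
    have hprod : (μ.prod (Measure.pi fun _ : Fin n => μ)) ≪
        (ν.prod (Measure.pi fun _ : Fin n => ν)) := by
      haveI : SigmaFinite (Measure.pi fun _ : Fin n => ν) := inferInstance
      exact h.prod (ih μ ν hμ hν h)
    exact hprod.map (MeasurableEquiv.measurable _)
section
variable {d : ℕ}

noncomputable def Fder (γ : ℝ → (Fin d → ℝ)) (x : Fin d → ℝ) :
    (Fin d → ℝ) →L[ℝ] (Fin d → ℝ) :=
  ∑ i : Fin d, (ContinuousLinearMap.proj i : (Fin d → ℝ) →L[ℝ] ℝ).smulRight (deriv γ (x i))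

lemma hasFDerivAt_sum (γ : ℝ → (Fin d → ℝ)) (hγ : ContDiff ℝ (⊤ : ℕ∞) γ) (x : Fin d → ℝ) :
    HasFDerivAt (fun s : Fin d → ℝ => ∑ i, γ (s i)) (Fder γ x) x := by
  have h : ∀ i : Fin d, HasFDerivAt (fun s : Fin d → ℝ => γ (s i))
      ((ContinuousLinearMap.proj i : (Fin d → ℝ) →L[ℝ] ℝ).smulRight (deriv γ (x i))) x := by
    intro i
    have h1 : HasDerivAt γ (deriv γ (x i)) (x i) :=
      (hγ.differentiable (by simp) (x i)).hasDerivAt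
    have h2 : HasFDerivAt (fun s : Fin d → ℝ => s i)
        (ContinuousLinearMap.proj i : (Fin d → ℝ) →L[ℝ] ℝ) x := by
      exact (ContinuousLinearMap.proj i :
        (Fin d → ℝ) →L[ℝ] ℝ).hasFDerivAt
    have h3 := h1.hasFDerivAt.comp x h2
    exact h3.congr_fderiv (by ext t; simp)
  exact HasFDerivAt.fun_sum (fun i _ => h i)

noncomputable def Mder (γ : ℝ → (Fin d → ℝ)) (x : Fin d → ℝ) : Matrix (Fin d) (Fin d) ℝ :=
  Matrix.of fun i j => deriv γ (x i) j

lemma det_Fder (γ : ℝ → (Fin d → ℝ)) (x : Fin d → ℝ) :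
    (Fder γ x).det = (Mder γ x).det := by
  have hlin : (Fder γ x : (Fin d → ℝ) →ₗ[ℝ] (Fin d → ℝ)) = Matrix.toLin' (Matrix.transpose (Mder γ x)) := by
    apply LinearMap.ext
    intro t
    funext j
    simp [Fder, Mder, Matrix.toLin'_apply, Matrix.mulVec, dotProduct,
      ContinuousLinearMap.smulRight_apply, mul_comm]
  rw [ContinuousLinearMap.det, hlin, LinearMap.det_toLin', Matrix.det_transpose]

lemma cont_det (γ : ℝ → (Fin d → ℝ)) (hγ : ContDiff ℝ (⊤ : ℕ∞) γ) :
    Continuous fun x : Fin d → ℝ => (Mder γ x).det := by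
  apply Continuous.matrix_det
  apply continuous_matrix
  intro i j
  exact (continuous_apply j).comp ((hγ.continuous_deriv (by simp)).comp (continuous_apply i))

lemma det_ne_zero_of_li (γ : ℝ → (Fin d → ℝ)) (x : Fin d → ℝ)
    (h : LinearIndependent ℝ (fun i : Fin d => deriv γ (x i))) : (Mder γ x).det ≠ 0 := by
  have : IsUnit (Mder γ x) := by
    rw [← Matrix.linearIndependent_rows_iff_isUnit]
    exact h
  rw [← isUnit_iff_ne_zero, ← Matrix.isUnit_iff_isUnit_det]
  exact this


lemma contDiff_F (γ : ℝ → (Fin d → ℝ)) (hγ : ContDiff ℝ (⊤ : ℕ∞) γ) :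
    ContDiff ℝ (⊤ : ℕ∞) (fun s : Fin d → ℝ => ∑ i, γ (s i)) :=
  ContDiff.sum fun i _ => hγ.comp (ContinuousLinearMap.proj i :
    (Fin d → ℝ) →L[ℝ] ℝ).contDiff

lemma loc_inj (γ : ℝ → (Fin d → ℝ)) (hγ : ContDiff ℝ (⊤ : ℕ∞) γ) (x : Fin d → ℝ)
    (hx : (Mder γ x).det ≠ 0) :
    ∃ U : Set (Fin d → ℝ), IsOpen U ∧ x ∈ U ∧
      Set.InjOn (fun s : Fin d → ℝ => ∑ i, γ (s i)) U := by
  have hdet : (Fder γ x).det ≠ 0 := by rw [det_Fder]; exact hx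
  have hU : IsUnit (LinearMap.toMatrix (Pi.basisFun ℝ (Fin d)) (Pi.basisFun ℝ (Fin d))
      (Fder γ x : (Fin d → ℝ) →ₗ[ℝ] (Fin d → ℝ))).det := by
    rw [LinearMap.det_toMatrix]
    exact isUnit_iff_ne_zero.2 hdet
  set e₀ := LinearEquiv.ofIsUnitDet hU with he₀
  set e : (Fin d → ℝ) ≃L[ℝ] (Fin d → ℝ) := e₀.toContinuousLinearEquiv with he
  have hcoe : (e : (Fin d → ℝ) →L[ℝ] (Fin d → ℝ)) = Fder γ x := by
    refine ContinuousLinearMap.ext fun t => ?_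
    show e₀ t = Fder γ x t
    rw [LinearEquiv.ofIsUnitDet_apply]
    rfl
  have hsd : HasStrictFDerivAt (fun s : Fin d → ℝ => ∑ i, γ (s i))
      (e : (Fin d → ℝ) →L[ℝ] (Fin d → ℝ)) x := by
    rw [hcoe]
    exact ((contDiff_F γ hγ).contDiffAt).hasStrictFDerivAt' (hasFDerivAt_sum γ hγ x) (by simp)
  refine ⟨(hsd.toOpenPartialHomeomorph _).source, (hsd.toOpenPartialHomeomorph _).open_source,
    hsd.mem_toOpenPartialHomeomorph_source, ?_⟩
  have := (hsd.toOpenPartialHomeomorph _).injOn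
  rwa [hsd.toOpenPartialHomeomorph_coe] at this

lemma preimage_null (γ : ℝ → (Fin d → ℝ)) (hγ : ContDiff ℝ (⊤ : ℕ∞) γ)
    (hgen : ∀ᵐ s : Fin d → ℝ ∂volume,
      LinearIndependent ℝ (fun i : Fin d => deriv γ (s i)))
    (A : Set (Fin d → ℝ)) (hA : MeasurableSet A) (h0 : volume A = 0) :
    volume ((fun s : Fin d → ℝ => ∑ i, γ (s i)) ⁻¹' A) = 0 := by
  classical
  set F : (Fin d → ℝ) → (Fin d → ℝ) := fun s => ∑ i, γ (s i) with hF
  set G : Set (Fin d → ℝ) := {x | (Mder γ x).det ≠ 0} with hG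
  have hGopen : IsOpen G := isOpen_ne.preimage (cont_det γ hγ)
  have hGc : volume Gᶜ = 0 := by
    refine measure_mono_null ?_ hgen
    intro x hx
    simp only [Set.mem_compl_iff, hG, Set.mem_setOf_eq, not_not] at hx
    intro hli
    exact det_ne_zero_of_li γ x hli hx
  -- for each x in G, an open neighborhood inside G on which F is injective
  have hloc : ∀ x : G, ∃ U : Set (Fin d → ℝ), IsOpen U ∧ (x : Fin d → ℝ) ∈ U ∧
      U ⊆ G ∧ Set.InjOn F U := by
    rintro ⟨x, hx⟩
    obtain ⟨U, hUo, hxU, hUinj⟩ := loc_inj γ hγ x hx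
    exact ⟨U ∩ G, hUo.inter hGopen, ⟨hxU, hx⟩, Set.inter_subset_right,
      hUinj.mono Set.inter_subset_left⟩
  choose U hUo hxU hUG hUinj using hloc
  obtain ⟨T, hT, hTeq⟩ := TopologicalSpace.isOpen_iUnion_countable U hUo
  have hGsub : G ⊆ ⋃ i ∈ T, U i := by
    intro x hx
    rw [hTeq]
    exact Set.mem_iUnion.2 ⟨⟨x, hx⟩, hxU ⟨x, hx⟩⟩
  -- each piece is null
  have hpiece : ∀ i : G, volume (F ⁻¹' A ∩ U i) = 0 := by
    intro i
    set s := F ⁻¹' A ∩ U i with hs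
    have hsm : MeasurableSet s :=
      ((contDiff_F γ hγ).continuous.measurable hA).inter (hUo i).measurableSet
    have hle := lintegral_abs_det_fderiv_le_addHaar_image volume hsm
      (f' := Fder γ) (fun x _ => (hasFDerivAt_sum γ hγ x).hasFDerivWithinAt)
      ((hUinj i).mono Set.inter_subset_right)
    have himg : volume (F '' s) = 0 :=
      measure_mono_null (Set.image_subset_iff.2 fun x hx => hx.1) h0
    rw [himg, nonpos_iff_eq_zero] at hle
    have hmeas : Measurable fun x : Fin d → ℝ => ENNReal.ofReal |(Fder γ x).det| := by
      apply Measurable.ennreal_ofReal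
      apply Continuous.measurable
      have : (fun x : Fin d → ℝ => (Fder γ x).det) = fun x => (Mder γ x).det := by
        funext x; exact det_Fder γ x
      rw [show (fun x : Fin d → ℝ => |(Fder γ x).det|)
          = fun x => |(Mder γ x).det| by funext x; rw [det_Fder]]
      exact (cont_det γ hγ).abs
    rw [lintegral_eq_zero_iff hmeas] at hle
    rw [Filter.EventuallyEq, ae_restrict_iff' hsm] at hle
    refine measure_mono_null ?_ hle
    intro x hx hin
    have hxG : x ∈ G := hUG i hx.2
    have : (Fder γ x).det ≠ 0 := by rw [det_Fder]; exact hxG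
    have := hin hx
    simp only [Pi.zero_apply, ENNReal.ofReal_eq_zero] at this
    exact absurd (le_antisymm this (abs_nonneg _)) (abs_ne_zero.2 ‹(Fder γ x).det ≠ 0›)
  have hsplit : F ⁻¹' A ⊆ Gᶜ ∪ ⋃ i ∈ T, (F ⁻¹' A ∩ U i) := by
    intro x hx
    by_cases hxG : x ∈ G
    · rcases Set.mem_iUnion₂.1 (hGsub hxG) with ⟨i, hiT, hxU⟩
      exact Or.inr (Set.mem_iUnion₂.2 ⟨i, hiT, hx, hxU⟩)
    · exact Or.inl hxG
  refine measure_mono_null hsplit (measure_union_null hGc ?_)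
  exact (measure_biUnion_null_iff hT).2 fun i _ => hpiece i

/-- For a smooth curve `γ` in general position in `ℝ^d` and `ν` the pushforward under
`γ` of an absolutely continuous probability measure `ρ` on the parameter interval,
the `d`-fold convolution power `ν^{*d}` (the pushforward of `ν^{⊗d}` under the sum map)
is absolutely continuous with respect to Lebesgue measure on `ℝ^d`. -/
theorem stmt12 {d : ℕ} (γ : ℝ → (Fin d → ℝ)) (hγ : ContDiff ℝ (⊤ : ℕ∞) γ)
    (hgen : ∀ᵐ s : Fin d → ℝ ∂volume,
      LinearIndependent ℝ (fun i : Fin d => deriv γ (s i)))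
    (ρ : Measure ℝ) [IsProbabilityMeasure ρ] (hρ : ρ ≪ volume) :
    Measure.map (fun s : Fin d → ℝ => ∑ i, γ (s i)) (Measure.pi fun _ => ρ)
      ≪ volume := by
  have hFmeas : Measurable (fun s : Fin d → ℝ => ∑ i, γ (s i)) :=
    (contDiff_F γ hγ).continuous.measurable
  refine Measure.AbsolutelyContinuous.mk fun A hA h0 => ?_
  rw [Measure.map_apply hFmeas hA]
  have hpre : volume ((fun s : Fin d → ℝ => ∑ i, γ (s i)) ⁻¹' A) = 0 :=
    preimage_null γ hγ hgen A hA h0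
  have hac : Measure.pi (fun _ : Fin d => ρ)
      ≪ Measure.pi (fun _ : Fin d => (volume : Measure ℝ)) :=
    pi_ac d ρ volume inferInstance inferInstance hρ
  apply hac
  rw [← volume_pi]
  exact hpre
end
end
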